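/- arXiv:0902.1131 — 4 statements merged into one kernel-verified Lean document; each statement's English description precedes it below -/
import Mathlib

section
/- Let a > 0 and λ > 0. Let w : [0,a] → ℝ be continuously differentiable with w(t) > 0 and w'(t) ≥ 1 for all t ∈ [0,a], and let φ : [0,a] → ℝ be continuously differentiable with φ(0) = 0. Then ∫₀ᵃ w(t)^(−2λ) φ(t)² dt ≤ (a·w(a)/(2λ+1)) · ∫₀ᵃ w(t)^(−2λ) φ'(t)² dt. -/
/-!
Writing `φ(t) = ∫₀ᵗ φ'`, the weighted Cauchy–Schwarz inequality gives
`φ(t)² ≤ (∫₀ᵗ w^{2λ}) (∫₀ᵗ w^{-2λ} φ'²)`. Since `w' ≥ 1`, the first factor is at most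
`∫₀ᵗ w^{2λ} w' ≤ w(t)^{2λ+1} / (2λ+1)`, so `w(t)^{-2λ} φ(t)² ≤ w(t)/(2λ+1) · ∫₀ᵃ w^{-2λ} φ'²`.
As `w` is increasing, `w(t) ≤ w(a)`, and integrating this pointwise bound over `[0, a]` gives
the factor `a`.
-/

open MeasureTheory Set

theorem sq_integral_mul_le_integral_sq_mul_integral_sq {α : Type*} [MeasurableSpace α]
    {μ : Measure α} {f g : α → ℝ} (hf : MemLp f 2 μ) (hg : MemLp g 2 μ) :
    (∫ x, f x * g x ∂μ) ^ 2 ≤ (∫ x, f x ^ 2 ∂μ) * ∫ x, g x ^ 2 ∂μ := by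
  have inner_toLp {u v : α → ℝ} (hu : MemLp u 2 μ) (hv : MemLp v 2 μ) :
      inner ℝ (hu.toLp u) (hv.toLp v) = ∫ x, u x * v x ∂μ := by
    rw [L2.inner_def]
    refine integral_congr_ae ?_
    filter_upwards [hu.coeFn_toLp, hv.coeFn_toLp] with x hux hvx
    simp [hux, hvx, mul_comm]
  simpa only [inner_toLp, sq] using real_inner_mul_inner_self_le (hf.toLp f) (hg.toLp g)

theorem sq_integral_le_integral_mul_integral_inv_mul_sq {α : Type*} [MeasurableSpace α]
    {μ : Measure α} {ρ h : α → ℝ} (hρ : Integrable ρ μ) (hρpos : ∀ᵐ x ∂μ, 0 < ρ x)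
    (hh : AEStronglyMeasurable h μ) (hρh : Integrable (fun x => (ρ x)⁻¹ * h x ^ 2) μ) :
    (∫ x, h x ∂μ) ^ 2 ≤ (∫ x, ρ x ∂μ) * ∫ x, (ρ x)⁻¹ * h x ^ 2 ∂μ := by
  have hsqrt : AEStronglyMeasurable (fun x => √(ρ x)) μ :=
    hρ.aestronglyMeasurable.aemeasurable.sqrt.aestronglyMeasurable
  have hf : MemLp (fun x => √(ρ x)) 2 μ := by
    refine (memLp_two_iff_integrable_sq hsqrt).2 (hρ.congr ?_)
    filter_upwards [hρpos] with x hx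
    simp [Real.sq_sqrt hx.le]
  have hg : MemLp (fun x => h x / √(ρ x)) 2 μ := by
    refine (memLp_two_iff_integrable_sq (hh.div₀ hsqrt)).2 (hρh.congr ?_)
    filter_upwards [hρpos] with x hx
    rw [Pi.div_apply, div_pow, Real.sq_sqrt hx.le, div_eq_inv_mul]
  convert sq_integral_mul_le_integral_sq_mul_integral_sq hf hg using 2 <;>
    refine integral_congr_ae ?_ <;> filter_upwards [hρpos] with x hx
  · field_simp
  · simp [Real.sq_sqrt hx.le]
  · rw [div_pow, Real.sq_sqrt hx.le, div_eq_inv_mul]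

section Interval

variable {a b : ℝ}

theorem sq_sub_le_integral_mul_integral_inv_mul_deriv_sq {φ φ' ρ : ℝ → ℝ} (hab : a ≤ b)
    (hφ : ∀ x ∈ Icc a b, HasDerivAt φ (φ' x) x) (hφ' : ContinuousOn φ' (Icc a b))
    (hρ : ContinuousOn ρ (Icc a b)) (hρpos : ∀ x ∈ Icc a b, 0 < ρ x) :
    (φ b - φ a) ^ 2 ≤ (∫ x in a..b, ρ x) * ∫ x in a..b, (ρ x)⁻¹ * φ' x ^ 2 := by
  rw [← intervalIntegral.integral_eq_sub_of_hasDerivAt_of_le hab (HasDerivAt.continuousOn hφ)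
    (fun x hx => hφ x (Ioo_subset_Icc_self hx)) (hφ'.intervalIntegrable_of_Icc hab)]
  simp only [intervalIntegral.integral_of_le hab]
  exact sq_integral_le_integral_mul_integral_inv_mul_sq
    (hρ.integrableOn_Icc.mono_set Ioc_subset_Icc_self)
    (ae_restrict_of_forall_mem measurableSet_Ioc fun x hx => hρpos x (Ioc_subset_Icc_self hx))
    ((hφ'.mono Ioc_subset_Icc_self).aestronglyMeasurable measurableSet_Ioc)
    (((hρ.inv₀ fun x hx => (hρpos x hx).ne').mul (hφ'.pow 2)).integrableOn_Icc.mono_set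
      Ioc_subset_Icc_self)

theorem integral_rpow_le_of_one_le_deriv {w w' : ℝ → ℝ} {s : ℝ} (hab : a ≤ b) (hs : s + 1 ≠ 0)
    (hw : ∀ x ∈ Icc a b, HasDerivAt w (w' x) x) (hwpos : ∀ x ∈ Icc a b, 0 < w x)
    (hw' : ∀ x ∈ Icc a b, 1 ≤ w' x) :
    ∫ x in a..b, w x ^ s ≤ (w b ^ (s + 1) - w a ^ (s + 1)) / (s + 1) := by
  have hwcont := HasDerivAt.continuousOn hw
  rw [sub_div]
  refine intervalIntegral.integral_le_sub_of_hasDeriv_right_of_le (g' := fun x => w x ^ s * w' x)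
    hab ((hwcont.rpow_const fun x hx => .inl (hwpos x hx).ne').div_const _) (fun x hx => ?_)
    (hwcont.rpow_const fun x hx => .inl (hwpos x hx).ne').integrableOn_Icc fun x hx => ?_
  · have hx' := Ioo_subset_Icc_self hx
    refine (((hw x hx').rpow_const (.inl (hwpos x hx').ne')).div_const (s + 1)).hasDerivWithinAt
      |>.congr_deriv ?_
    rw [add_sub_cancel_right]
    field_simp
  · have hx' := Ioo_subset_Icc_self hx
    exact le_mul_of_one_le_right (Real.rpow_nonneg (hwpos x hx').le _) (hw' x hx')

variable {w w' φ φ' : ℝ → ℝ} {s : ℝ}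

theorem rpow_neg_mul_sq_le_of_one_le_deriv (hab : a ≤ b) (hs : 0 < s + 1)
    (hw : ∀ x ∈ Icc a b, HasDerivAt w (w' x) x) (hwpos : ∀ x ∈ Icc a b, 0 < w x)
    (hw' : ∀ x ∈ Icc a b, 1 ≤ w' x) (hφ : ∀ x ∈ Icc a b, HasDerivAt φ (φ' x) x)
    (hφ' : ContinuousOn φ' (Icc a b)) (hφa : φ a = 0) :
    w b ^ (-s) * φ b ^ 2 ≤ w b / (s + 1) * ∫ x in a..b, w x ^ (-s) * φ' x ^ 2 := by
  set J := ∫ x in a..b, w x ^ (-s) * φ' x ^ 2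
  have hwb := hwpos b (right_mem_Icc.2 hab)
  have hφb : φ b ^ 2 ≤ (∫ x in a..b, w x ^ s) * J := by
    have hinv : ∫ x in a..b, (w x ^ s)⁻¹ * φ' x ^ 2 = J :=
      intervalIntegral.integral_congr fun x hx => by
        simp only [Real.rpow_neg (hwpos x (uIcc_of_le hab ▸ hx)).le]
    simpa only [hφa, sub_zero, hinv] using
      sq_sub_le_integral_mul_integral_inv_mul_deriv_sq (ρ := fun x => w x ^ s) hab hφ hφ'
        ((HasDerivAt.continuousOn hw).rpow_const fun x hx => .inl (hwpos x hx).ne')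
        fun x hx => Real.rpow_pos_of_pos (hwpos x hx) s
  have hX : ∫ x in a..b, w x ^ s ≤ w b ^ (s + 1) / (s + 1) :=
    (integral_rpow_le_of_one_le_deriv hab hs.ne' hw hwpos hw').trans <| by
      gcongr
      exact sub_le_self _ (Real.rpow_nonneg (hwpos a (left_mem_Icc.2 hab)).le _)
  have hJ : 0 ≤ J := intervalIntegral.integral_nonneg hab
    fun x hx => mul_nonneg (Real.rpow_nonneg (hwpos x hx).le _) (sq_nonneg _)
  calc w b ^ (-s) * φ b ^ 2
      ≤ w b ^ (-s) * ((∫ x in a..b, w x ^ s) * J) := by gcongr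
    _ ≤ w b ^ (-s) * (w b ^ (s + 1) / (s + 1) * J) := by gcongr
    _ = w b / (s + 1) * J := by
      rw [Real.rpow_add hwb, Real.rpow_neg hwb.le, Real.rpow_one]
      field_simp

theorem rpow_neg_mul_sq_le_of_mem_Icc (hab : a ≤ b) (hs : 0 < s + 1)
    (hw : ∀ x ∈ Icc a b, HasDerivAt w (w' x) x) (hwpos : ∀ x ∈ Icc a b, 0 < w x)
    (hw' : ∀ x ∈ Icc a b, 1 ≤ w' x) (hφ : ∀ x ∈ Icc a b, HasDerivAt φ (φ' x) x)
    (hφ' : ContinuousOn φ' (Icc a b)) (hφa : φ a = 0) {t : ℝ} (ht : t ∈ Icc a b) :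
    w t ^ (-s) * φ t ^ 2 ≤ w b / (s + 1) * ∫ x in Icc a b, w x ^ (-s) * φ' x ^ 2 := by
  have hsub : Icc a t ⊆ Icc a b := Icc_subset_Icc_right ht.2
  have hnonneg : ∀ x ∈ Icc a b, 0 ≤ w x ^ (-s) * φ' x ^ 2 :=
    fun x hx => mul_nonneg (Real.rpow_nonneg (hwpos x hx).le _) (sq_nonneg _)
  have hwt : w t ≤ w b :=
    monotoneOn_of_hasDerivWithinAt_nonneg (convex_Icc a b) (HasDerivAt.continuousOn hw)
      (fun x hx => (hw x (interior_subset hx)).hasDerivWithinAt)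
      (fun x hx => zero_le_one.trans (hw' x (interior_subset hx))) ht (right_mem_Icc.2 hab) ht.2
  have hJ : ∫ x in a..t, w x ^ (-s) * φ' x ^ 2 ≤ ∫ x in Icc a b, w x ^ (-s) * φ' x ^ 2 := by
    rw [intervalIntegral.integral_of_le ht.1]
    exact setIntegral_mono_set
      (((HasDerivAt.continuousOn hw).rpow_const fun x hx => .inl (hwpos x hx).ne').mul
        (hφ'.pow 2)).integrableOn_Icc
      (ae_restrict_of_forall_mem measurableSet_Icc hnonneg)
      (Ioc_subset_Icc_self.trans hsub).eventuallyLE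
  calc w t ^ (-s) * φ t ^ 2
      ≤ w t / (s + 1) * ∫ x in a..t, w x ^ (-s) * φ' x ^ 2 :=
        rpow_neg_mul_sq_le_of_one_le_deriv ht.1 hs (fun x hx => hw x (hsub hx))
          (fun x hx => hwpos x (hsub hx)) (fun x hx => hw' x (hsub hx))
          (fun x hx => hφ x (hsub hx)) (hφ'.mono hsub) hφa
    _ ≤ w b / (s + 1) * ∫ x in Icc a b, w x ^ (-s) * φ' x ^ 2 :=
        mul_le_mul (div_le_div_of_nonneg_right hwt hs.le) hJ
          (intervalIntegral.integral_nonneg ht.1 fun x hx => hnonneg x (hsub hx))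
          (div_nonneg (hwpos b (right_mem_Icc.2 hab)).le hs.le)

end Interval

theorem weighted_hardy_inequality_general (a lam : ℝ) (ha : 0 < a) (hlam : 0 < lam)
    (w w' φ φ' : ℝ → ℝ)
    (hw : ∀ t ∈ Icc (0:ℝ) a, HasDerivAt w (w' t) t)
    (hwpos : ∀ t ∈ Icc (0:ℝ) a, 0 < w t)
    (hw'1 : ∀ t ∈ Icc (0:ℝ) a, 1 ≤ w' t)
    (hφ : ∀ t ∈ Icc (0:ℝ) a, HasDerivAt φ (φ' t) t)
    (hφ'cont : ContinuousOn φ' (Icc 0 a))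
    (hφ0 : φ 0 = 0) :
    ∫ t in Icc (0:ℝ) a, w t ^ (-(2*lam)) * (φ t)^2
      ≤ (a * w a / (2*lam + 1)) * ∫ t in Icc (0:ℝ) a, w t ^ (-(2*lam)) * (φ' t)^2 := by
  set I := ∫ t in Icc (0:ℝ) a, w t ^ (-(2*lam)) * (φ' t)^2
  have hpointwise : ∀ t ∈ Icc 0 a, w t ^ (-(2*lam)) * φ t ^ 2 ≤ w a / (2*lam + 1) * I :=
    fun t ht => rpow_neg_mul_sq_le_of_mem_Icc ha.le (by linarith) hw hwpos hw'1 hφ hφ'cont hφ0 ht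
  have hintegrable : IntegrableOn (fun t => w t ^ (-(2*lam)) * φ t ^ 2) (Icc 0 a) :=
    (((HasDerivAt.continuousOn hw).rpow_const fun x hx => .inl (hwpos x hx).ne').mul
      ((HasDerivAt.continuousOn hφ).pow 2)).integrableOn_Icc
  calc ∫ t in Icc (0:ℝ) a, w t ^ (-(2*lam)) * φ t ^ 2
      ≤ ∫ t in Icc (0:ℝ) a, w a / (2*lam + 1) * I :=
        setIntegral_mono_on hintegrable (integrableOn_const (by simp) enorm_ne_top)
          measurableSet_Icc hpointwise
    _ = a * w a / (2*lam + 1) * I := by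
      rw [setIntegral_const, Real.volume_real_Icc_of_le ha.le, smul_eq_mul]
      ring

/-- One-dimensional weighted Hardy-type inequality: the core computation of the
paper's key Lemma (the slice-wise estimate `theest`). -/
theorem weighted_hardy_inequality (a lam : ℝ) (ha : 0 < a) (hlam : 0 < lam)
    (w w' φ φ' : ℝ → ℝ)
    (hw : ∀ t ∈ Icc (0:ℝ) a, HasDerivAt w (w' t) t)
    (hw'cont : ContinuousOn w' (Icc 0 a))
    (hwpos : ∀ t ∈ Icc (0:ℝ) a, 0 < w t)
    (hw'1 : ∀ t ∈ Icc (0:ℝ) a, 1 ≤ w' t)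
    (hφ : ∀ t ∈ Icc (0:ℝ) a, HasDerivAt φ (φ' t) t)
    (hφ'cont : ContinuousOn φ' (Icc 0 a))
    (hφ0 : φ 0 = 0) :
    ∫ t in Icc (0:ℝ) a, w t ^ (-(2*lam)) * (φ t)^2
      ≤ (a * w a / (2*lam + 1)) * ∫ t in Icc (0:ℝ) a, w t ^ (-(2*lam)) * (φ' t)^2 :=
  weighted_hardy_inequality_general a lam ha hlam w w' φ φ' hw hwpos hw'1 hφ hφ'cont hφ0
end

section
/- There exists a constant C > 0, depending only on ε, μ, M, such that for every λ > 0 and every continuously differentiable φ : ℝ⁴ → ℝ that vanishes at every point of B_ε with u₊ = 0, one has ‖φ‖_λ ≤ (C/√λ) · ‖∂_{u₊}φ‖_λ. -/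
open MeasureTheory

/-- Partial derivative of a function on ℝ⁴ in the `i`-th coordinate direction. -/
noncomputable def pd (i : Fin 4) (φ : (Fin 4 → ℝ) → ℝ) (x : Fin 4 → ℝ) : ℝ :=
  fderiv ℝ φ x (Pi.single i 1)

/-- The region `B_ε = {u₊² + u₋² + x₁² + x₂² ≤ ε²⁰, u₊ ≥ 0, u₋ ≥ 0}`, with
coordinates `x = (u₊, x₁, x₂, u₋)` indexed by `0,1,2,3`. -/
def IKregion (ε : ℝ) : Set (Fin 4 → ℝ) :=
  {x | (x 0)^2 + (x 3)^2 + (x 1)^2 + (x 2)^2 ≤ ε^20 ∧ 0 ≤ x 0 ∧ 0 ≤ x 3}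

/-- The Ionescu–Klainerman Carleman weight
`f_ε(x) = log(ε⁻¹(u₊+ε)(u₋+ε) + ε¹⁰(u₊² + u₋² + x₁² + x₂²))`. -/
noncomputable def IKweight (ε : ℝ) (x : Fin 4 → ℝ) : ℝ :=
  Real.log (ε⁻¹ * (x 0 + ε) * (x 3 + ε) + ε^10 * ((x 0)^2 + (x 3)^2 + (x 1)^2 + (x 2)^2))

/-- The weighted norm `‖φ‖_λ = (∫_{B_ε} φ² e^(−2λ f_ε) ω dx)^(1/2)`. -/
noncomputable def IKnorm (ε : ℝ) (ω : (Fin 4 → ℝ) → ℝ) (lam : ℝ)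
    (φ : (Fin 4 → ℝ) → ℝ) : ℝ :=
  Real.sqrt (∫ x in IKregion ε, (φ x)^2 * Real.exp (-(2*lam) * IKweight ε x) * ω x)

/-!
Along each line parallel to the `u₊`-axis the region `B_ε` is a segment `0 ≤ u₊ ≤ T` with
`T ≤ ε¹⁰`. The `u₊`-derivative of the argument of the logarithm in `f_ε` is at least `1`, so
on such a segment `f_ε` grows at rate at least `1 / K`, where `K` bounds that argument on the
compact set `B_ε`. Since `φ` vanishes at `u₊ = 0`, `φ(t) = ∫₀ᵗ ∂φ`, and with
`e^{-λ f(t)} ≤ e^{-λ f(s)} e^{-λ (t - s) / K}` Cauchy–Schwarz gives the pointwise bound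
`φ(t)² e^{-2λ f(t)} ≤ K / (2λ) ∫₀ᵗ (∂φ)² e^{-2λ f}`. Integrating over the segment and then
over the remaining coordinates (Tonelli), and comparing `ω` with the constants `μ ≤ ω ≤ M`,
gives the lemma with `C² = M K ε¹⁰ / (2μ)`.
-/

open Set Real
open scoped ENNReal

theorem Real.log_add_div_le_log {a b d K : ℝ} (ha : 0 < a) (hd : 0 ≤ d) (hab : a + d ≤ b)
    (hbK : b ≤ K) : log a + d / K ≤ log b := by
  have hb : 0 < b := by linarith
  have hlog : log (a / b) ≤ a / b - 1 := log_le_sub_one_of_pos (by positivity)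
  rw [log_div ha.ne' hb.ne'] at hlog
  have : d / K ≤ d / b := div_le_div_of_nonneg_left hd hb hbK
  have : d / b ≤ 1 - a / b := by rw [one_sub_div hb.ne']; gcongr; linarith
  linarith

theorem integral_exp_mul_sub_le_inv {c t : ℝ} (hc : 0 < c) :
    ∫ s in 0..t, exp (c * (s - t)) ≤ c⁻¹ := by
  simp only [mul_sub, intervalIntegral.integral_comp_mul_sub (fun x => exp x) hc.ne',
    integral_exp, sub_self, exp_zero, smul_eq_mul, mul_zero, zero_sub]
  have := exp_pos (-(c * t))
  have := inv_pos.mpr hc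
  nlinarith

section Integrals

variable {α : Type*} [MeasurableSpace α] {ν : Measure α}

theorem sq_integral_mul_le_of_nonneg {a b : α → ℝ} (ha0 : 0 ≤ᵐ[ν] a) (hb0 : 0 ≤ᵐ[ν] b)
    (ha : MemLp a 2 ν) (hb : MemLp b 2 ν) :
    (∫ x, a x * b x ∂ν) ^ 2 ≤ (∫ x, a x ^ 2 ∂ν) * ∫ x, b x ^ 2 ∂ν := by
  have h := integral_mul_le_Lp_mul_Lq_of_nonneg Real.HolderConjugate.two_two ha0 hb0
    (by simpa using ha) (by simpa using hb)
  simp only [rpow_two, ← sqrt_eq_rpow] at h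
  have hab : 0 ≤ ∫ x, a x * b x ∂ν :=
    integral_nonneg_of_ae (by filter_upwards [ha0, hb0] with x hax hbx using mul_nonneg hax hbx)
  calc (∫ x, a x * b x ∂ν) ^ 2 ≤ (√(∫ x, a x ^ 2 ∂ν) * √(∫ x, b x ^ 2 ∂ν)) ^ 2 := by gcongr
    _ = _ := by
      rw [mul_pow, sq_sqrt (integral_nonneg fun x => sq_nonneg _),
        sq_sqrt (integral_nonneg fun x => sq_nonneg _)]

theorem integral_le_mul_integral_of_lintegral_le {f g : α → ℝ} {c : ℝ} (hc : 0 ≤ c)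
    (hf0 : 0 ≤ᵐ[ν] f) (hf : AEStronglyMeasurable f ν) (hg0 : 0 ≤ᵐ[ν] g) (hg : Integrable g ν)
    (h : ∫⁻ x, ENNReal.ofReal (f x) ∂ν ≤ ENNReal.ofReal c * ∫⁻ x, ENNReal.ofReal (g x) ∂ν) :
    ∫ x, f x ∂ν ≤ c * ∫ x, g x ∂ν := by
  rw [integral_eq_lintegral_of_nonneg_ae hf0 hf, integral_eq_lintegral_of_nonneg_ae hg0 hg.1,
    ← ENNReal.toReal_ofReal hc, ← ENNReal.toReal_mul]
  exact ENNReal.toReal_mono (ENNReal.mul_ne_top ENNReal.ofReal_ne_top hg.lintegral_lt_top.ne) h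

theorem setLIntegral_ofReal_mul_le {s : Set α} (hs : MeasurableSet s) {f ω : α → ℝ} {c : ℝ}
    (hf : ∀ x ∈ s, 0 ≤ f x) (hω : ∀ x ∈ s, ω x ≤ c) :
    ∫⁻ x in s, ENNReal.ofReal (f x * ω x) ∂ν ≤
      ENNReal.ofReal c * ∫⁻ x in s, ENNReal.ofReal (f x) ∂ν := by
  rw [← lintegral_const_mul' _ _ ENNReal.ofReal_ne_top]
  refine setLIntegral_mono' hs fun x hx => ?_
  rw [← ENNReal.ofReal_mul' (hf x hx), mul_comm c]
  exact ENNReal.ofReal_le_ofReal (mul_le_mul_of_nonneg_left (hω x hx) (hf x hx))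

theorem setLIntegral_ofReal_le_inv_mul {s : Set α} (hs : MeasurableSet s) {f ω : α → ℝ} {c : ℝ}
    (hc : 0 < c) (hf : ∀ x ∈ s, 0 ≤ f x) (hω : ∀ x ∈ s, c ≤ ω x) :
    ∫⁻ x in s, ENNReal.ofReal (f x) ∂ν ≤
      ENNReal.ofReal c⁻¹ * ∫⁻ x in s, ENNReal.ofReal (f x * ω x) ∂ν := by
  rw [← lintegral_const_mul' _ _ ENNReal.ofReal_ne_top]
  refine setLIntegral_mono' hs fun x hx => ?_
  rw [← ENNReal.ofReal_mul (inv_nonneg.2 hc.le)]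
  refine ENNReal.ofReal_le_ofReal ?_
  calc f x = c⁻¹ * (f x * c) := by field_simp
    _ ≤ c⁻¹ * (f x * ω x) := by gcongr; exacts [hf x hx, hω x hx]

end Integrals

theorem ContinuousOn.memLp_two_restrict_Ioc {f : ℝ → ℝ} {a b : ℝ}
    (hf : ContinuousOn f (Icc a b)) : MemLp f 2 (volume.restrict (Ioc a b)) :=
  (memLp_two_iff_integrable_sq
    ((hf.mono Ioc_subset_Icc_self).aestronglyMeasurable measurableSet_Ioc)).2
    ((hf.pow 2).integrableOn_Icc.mono_set Ioc_subset_Icc_self)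

theorem sq_intervalIntegral_mul_le_of_nonneg {a b : ℝ → ℝ} {t₀ t₁ : ℝ} (ht : t₀ ≤ t₁)
    (ha : ContinuousOn a (Icc t₀ t₁)) (hb : ContinuousOn b (Icc t₀ t₁))
    (ha0 : ∀ s, 0 ≤ a s) (hb0 : ∀ s, 0 ≤ b s) :
    (∫ s in t₀..t₁, a s * b s) ^ 2 ≤ (∫ s in t₀..t₁, a s ^ 2) * ∫ s in t₀..t₁, b s ^ 2 := by
  simp only [intervalIntegral.integral_of_le ht]
  exact sq_integral_mul_le_of_nonneg (.of_forall ha0) (.of_forall hb0) ha.memLp_two_restrict_Ioc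
    hb.memLp_two_restrict_Ioc

theorem abs_mul_exp_le_integral_of_hasDerivAt {g g' F : ℝ → ℝ} {t K lam : ℝ} (ht : 0 ≤ t)
    (hlam : 0 ≤ lam) (hg : ∀ s ∈ Icc 0 t, HasDerivAt g (g' s) s)
    (hg' : ContinuousOn g' (Icc 0 t)) (hg0 : g 0 = 0) (hF : ContinuousOn F (Icc 0 t))
    (hFt : ∀ s ∈ Icc 0 t, F s + (t - s) / K ≤ F t) :
    |g t| * exp (-lam * F t) ≤
      ∫ s in 0..t, |g' s| * exp (-lam * F s) * exp (lam / K * (s - t)) := by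
  have hgt : g t = ∫ s in 0..t, g' s := by
    rw [intervalIntegral.integral_eq_sub_of_hasDerivAt (by rwa [uIcc_of_le ht])
      (hg'.intervalIntegrable_of_Icc ht), hg0, sub_zero]
  have hpoint : ∀ s ∈ Icc 0 t,
      |g' s| * exp (-lam * F t) ≤ |g' s| * exp (-lam * F s) * exp (lam / K * (s - t)) := by
    intro s hs
    have := mul_le_mul_of_nonneg_left (hFt s hs) hlam
    rw [mul_assoc, ← exp_add]
    gcongr
    linarith [show lam / K * (s - t) = -(lam * ((t - s) / K)) by ring]
  calc |g t| * exp (-lam * F t) ≤ (∫ s in 0..t, |g' s|) * exp (-lam * F t) := by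
        rw [hgt]; gcongr; exact intervalIntegral.abs_integral_le_integral_abs ht
    _ = ∫ s in 0..t, |g' s| * exp (-lam * F t) := (intervalIntegral.integral_mul_const _ _).symm
    _ ≤ _ := intervalIntegral.integral_mono_on ht
      ((hg'.abs.intervalIntegrable_of_Icc ht).mul_const _)
      (((hg'.abs.mul (continuousOn_const.mul hF).rexp).mul (by fun_prop)).intervalIntegrable_of_Icc
        ht) hpoint

theorem sq_mul_exp_le_of_hasDerivAt {g g' F : ℝ → ℝ} {t K lam : ℝ} (ht : 0 ≤ t) (hK : 0 < K)
    (hlam : 0 < lam) (hg : ∀ s ∈ Icc 0 t, HasDerivAt g (g' s) s)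
    (hg' : ContinuousOn g' (Icc 0 t)) (hg0 : g 0 = 0) (hF : ContinuousOn F (Icc 0 t))
    (hFt : ∀ s ∈ Icc 0 t, F s + (t - s) / K ≤ F t) :
    g t ^ 2 * exp (-(2 * lam) * F t) ≤
      K / (2 * lam) * ∫ s in 0..t, g' s ^ 2 * exp (-(2 * lam) * F s) := by
  set a : ℝ → ℝ := fun s => |g' s| * exp (-lam * F s)
  set v : ℝ → ℝ := fun s => exp (lam / K * (s - t))
  have ha : ContinuousOn a (Icc 0 t) := hg'.abs.mul (continuousOn_const.mul hF).rexp
  have hv : ContinuousOn v (Icc 0 t) := by fun_prop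
  have ha2 : ∀ s, a s ^ 2 = g' s ^ 2 * exp (-(2 * lam) * F s) := fun s => by
    rw [mul_pow, sq_abs, ← exp_nat_mul]; ring_nf
  have hv2 : ∫ s in 0..t, v s ^ 2 ≤ K / (2 * lam) := by
    have : ∀ s, v s ^ 2 = exp (2 * lam / K * (s - t)) := fun s => by
      rw [← exp_nat_mul]; ring_nf
    simp only [this]
    exact (integral_exp_mul_sub_le_inv (by positivity)).trans_eq (by rw [inv_div])
  calc g t ^ 2 * exp (-(2 * lam) * F t) = (|g t| * exp (-lam * F t)) ^ 2 := by
        rw [mul_pow, sq_abs, ← exp_nat_mul]; ring_nf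
    _ ≤ (∫ s in 0..t, a s * v s) ^ 2 := by
        gcongr
        exact abs_mul_exp_le_integral_of_hasDerivAt ht hlam.le hg hg' hg0 hF hFt
    _ ≤ (∫ s in 0..t, a s ^ 2) * ∫ s in 0..t, v s ^ 2 :=
        sq_intervalIntegral_mul_le_of_nonneg ht ha hv (fun s => by positivity)
          fun s => by positivity
    _ ≤ (∫ s in 0..t, a s ^ 2) * (K / (2 * lam)) := by
        gcongr
        exact intervalIntegral.integral_nonneg ht fun s _ => sq_nonneg _
    _ = K / (2 * lam) * ∫ s in 0..t, g' s ^ 2 * exp (-(2 * lam) * F s) := by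
        simp only [ha2]; ring

theorem continuous_finCons_left {n : ℕ} (y : Fin n → ℝ) :
    Continuous fun t : ℝ => (Fin.cons t y : Fin (n + 1) → ℝ) := by
  fun_prop

theorem lintegral_eq_lintegral_lintegral_cons {n : ℕ} {G : (Fin (n + 1) → ℝ) → ℝ≥0∞}
    (hG : Measurable G) : ∫⁻ x, G x = ∫⁻ y : Fin n → ℝ, ∫⁻ t, G (Fin.cons t y) := by
  have e := (volume_preserving_piFinSuccAbove (fun _ : Fin (n + 1) => ℝ) 0).symm
  rw [← e.lintegral_comp hG, Measure.volume_eq_prod]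
  refine (lintegral_prod_symm' (μ := volume) (ν := volume) _ (hG.comp e.measurable)).trans ?_
  simp [MeasurableEquiv.piFinSuccAbove_symm_apply, Fin.insertNthEquiv, Fin.insertNth_zero']

theorem setLIntegral_eq_lintegral_setLIntegral_cons {n : ℕ} {s : Set (Fin (n + 1) → ℝ)}
    (hs : MeasurableSet s) {G : (Fin (n + 1) → ℝ) → ℝ≥0∞} (hG : Measurable G) :
    ∫⁻ x in s, G x = ∫⁻ y : Fin n → ℝ, ∫⁻ t in {t | Fin.cons t y ∈ s}, G (Fin.cons t y) := by
  rw [← lintegral_indicator hs, lintegral_eq_lintegral_lintegral_cons (hG.indicator hs)]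
  refine lintegral_congr fun y => ?_
  have hS : MeasurableSet {t : ℝ | Fin.cons t y ∈ s} :=
    hs.preimage (continuous_finCons_left y).measurable
  rw [← lintegral_indicator hS]
  rfl

theorem hasDerivAt_comp_finCons {φ : (Fin 4 → ℝ) → ℝ} (hφ : Differentiable ℝ φ)
    (y : Fin 3 → ℝ) (t : ℝ) :
    HasDerivAt (fun s => φ (Fin.cons s y)) (pd 0 φ (Fin.cons t y)) t := by
  have hcons : HasDerivAt (fun s : ℝ => (Fin.cons s y : Fin 4 → ℝ)) (Fin.cons 1 0) t :=
    HasDerivAt.finCons (F' := fun _ => ℝ) (hasDerivAt_id' t) (hasDerivAt_const t y)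
  rw [show (Fin.cons 1 0 : Fin 4 → ℝ) = Pi.single 0 1 by
    ext i; refine Fin.cases ?_ (fun j => ?_) i <;> simp] at hcons
  exact (hφ _).hasFDerivAt.comp_hasDerivAt t hcons

theorem continuous_pd {φ : (Fin 4 → ℝ) → ℝ} (hφ : ContDiff ℝ 1 φ) (i : Fin 4) :
    Continuous (pd i φ) :=
  (hφ.continuous_fderiv one_ne_zero).clm_apply continuous_const

namespace IKregion

variable {ε : ℝ}

theorem mem_cons_iff {t : ℝ} {y : Fin 3 → ℝ} :
    Fin.cons t y ∈ IKregion ε ↔ t ^ 2 + y 2 ^ 2 + y 0 ^ 2 + y 1 ^ 2 ≤ ε ^ 20 ∧ 0 ≤ t ∧ 0 ≤ y 2 :=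
  Iff.rfl

theorem sq_apply_le {x : Fin 4 → ℝ} (hx : x ∈ IKregion ε) (i : Fin 4) :
    x i ^ 2 ≤ (ε ^ 10) ^ 2 := by
  obtain ⟨hsum, -⟩ := hx
  have := sq_nonneg (x 0); have := sq_nonneg (x 1); have := sq_nonneg (x 2); have := sq_nonneg (x 3)
  fin_cases i <;> dsimp only [Fin.reduceFinMk] <;> linarith

theorem abs_apply_le {x : Fin 4 → ℝ} (hx : x ∈ IKregion ε) (i : Fin 4) : |x i| ≤ ε ^ 10 :=
  _root_.abs_le.mpr (abs_le_of_sq_le_sq' (sq_apply_le hx i) (by positivity))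

theorem isClosed : IsClosed (IKregion ε) := by
  simp only [IKregion, Set.ofPred_and]
  exact (isClosed_le (by fun_prop) continuous_const).inter
    ((isClosed_le continuous_const (continuous_apply 0)).inter
      (isClosed_le continuous_const (continuous_apply 3)))

theorem isCompact : IsCompact (IKregion ε) := by
  refine Metric.isCompact_of_isClosed_isBounded isClosed
    ((Metric.isBounded_closedBall (x := 0) (r := ε ^ 10)).subset fun x hx => ?_)
  rw [mem_closedBall_zero_iff, pi_norm_le_iff_of_nonneg (by positivity)]
  exact abs_apply_le hx

theorem measurableSet : MeasurableSet (IKregion ε) :=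
  isClosed.measurableSet

theorem cons_mem_of_le {t s : ℝ} {y : Fin 3 → ℝ} (ht : Fin.cons t y ∈ IKregion ε) (hs : 0 ≤ s)
    (hst : s ≤ t) : Fin.cons s y ∈ IKregion ε := by
  rw [mem_cons_iff] at ht ⊢
  exact ⟨by nlinarith, hs, ht.2.2⟩

end IKregion

noncomputable def IKarg (ε : ℝ) (x : Fin 4 → ℝ) : ℝ :=
  ε⁻¹ * (x 0 + ε) * (x 3 + ε) + ε^10 * ((x 0)^2 + (x 3)^2 + (x 1)^2 + (x 2)^2)

section IKarg

variable {ε : ℝ}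

theorem continuous_IKarg : Continuous (IKarg ε) := by
  unfold IKarg; fun_prop

theorem IKarg_pos (hε : 0 < ε) {x : Fin 4 → ℝ} (hx : x ∈ IKregion ε) : 0 < IKarg ε x := by
  obtain ⟨-, h0, h3⟩ := hx
  unfold IKarg; positivity

theorem continuousOn_IKweight (hε : 0 < ε) : ContinuousOn (IKweight ε) (IKregion ε) :=
  continuous_IKarg.continuousOn.log fun _ hx => (IKarg_pos hε hx).ne'

@[fun_prop]
theorem measurable_IKweight : Measurable (IKweight ε) :=
  measurable_log.comp continuous_IKarg.measurable

variable (ε) in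
theorem exists_IKarg_le : ∃ K > 0, ∀ x ∈ IKregion ε, IKarg ε x ≤ K := by
  obtain ⟨C, hC⟩ := IKregion.isCompact.exists_bound_of_continuousOn continuous_IKarg.continuousOn
  exact ⟨max C 1, by positivity, fun x hx =>
    (le_abs_self _).trans ((hC x hx).trans (le_max_left _ _))⟩

theorem IKarg_cons (t : ℝ) (y : Fin 3 → ℝ) : IKarg ε (Fin.cons t y) =
    ε⁻¹ * (t + ε) * (y 2 + ε) + ε ^ 10 * (t ^ 2 + y 2 ^ 2 + y 0 ^ 2 + y 1 ^ 2) :=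
  rfl

theorem IKarg_cons_add_le (hε : 0 < ε) {s t : ℝ} {y : Fin 3 → ℝ} (hy : 0 ≤ y 2) (hs : 0 ≤ s)
    (hst : s ≤ t) : IKarg ε (Fin.cons s y) + (t - s) ≤ IKarg ε (Fin.cons t y) := by
  have hdiff : IKarg ε (Fin.cons t y) - IKarg ε (Fin.cons s y) - (t - s) =
      ε⁻¹ * y 2 * (t - s) + ε ^ 10 * ((t - s) * (t + s)) := by
    rw [IKarg_cons, IKarg_cons]; field_simp; ring
  have hts : 0 ≤ t - s := sub_nonneg.2 hst
  have := mul_nonneg (mul_nonneg (inv_nonneg.2 hε.le) hy) hts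
  have := mul_nonneg (pow_nonneg hε.le 10) (mul_nonneg hts (by linarith : 0 ≤ t + s))
  linarith

theorem IKweight_cons_add_div_le (hε : 0 < ε) {K : ℝ} (hK : ∀ x ∈ IKregion ε, IKarg ε x ≤ K)
    {s t : ℝ} {y : Fin 3 → ℝ} (ht : Fin.cons t y ∈ IKregion ε) (hs : 0 ≤ s) (hst : s ≤ t) :
    IKweight ε (Fin.cons s y) + (t - s) / K ≤ IKweight ε (Fin.cons t y) :=
  log_add_div_le_log (IKarg_pos hε (IKregion.cons_mem_of_le ht hs hst)) (sub_nonneg.2 hst)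
    (IKarg_cons_add_le hε ht.2.2 hs hst) (hK _ ht)

end IKarg

section Carleman

variable {ε K lam : ℝ} {φ : (Fin 4 → ℝ) → ℝ}

theorem ofReal_sq_mul_exp_cons_le (hε : 0 < ε) (hK0 : 0 < K)
    (hK : ∀ x ∈ IKregion ε, IKarg ε x ≤ K) (hlam : 0 < lam) (hφ : ContDiff ℝ 1 φ)
    (hvan : ∀ x ∈ IKregion ε, x 0 = 0 → φ x = 0) {t : ℝ} {y : Fin 3 → ℝ}
    (ht : Fin.cons t y ∈ IKregion ε) :
    ENNReal.ofReal (φ (Fin.cons t y) ^ 2 * exp (-(2 * lam) * IKweight ε (Fin.cons t y))) ≤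
      ENNReal.ofReal (K / (2 * lam)) * ∫⁻ s in Ioc 0 t, ENNReal.ofReal
        (pd 0 φ (Fin.cons s y) ^ 2 * exp (-(2 * lam) * IKweight ε (Fin.cons s y))) := by
  have ht0 : 0 ≤ t := ht.2.1
  have hseg : MapsTo (fun s => Fin.cons s y) (Icc 0 t) (IKregion ε) := fun s hs =>
    IKregion.cons_mem_of_le ht hs.1 hs.2
  have hdφ := ((continuous_pd hφ 0).comp (continuous_finCons_left y)).continuousOn (s := Icc 0 t)
  have hF := (continuousOn_IKweight hε).comp (continuous_finCons_left y).continuousOn hseg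
  have h1D := sq_mul_exp_le_of_hasDerivAt ht0 hK0 hlam
    (fun s _ => hasDerivAt_comp_finCons (hφ.differentiable one_ne_zero) y s) hdφ
    (hvan _ (hseg ⟨le_rfl, ht0⟩) rfl) hF fun s hs => IKweight_cons_add_div_le hε hK ht hs.1 hs.2
  have hint : IntegrableOn (fun s =>
      pd 0 φ (Fin.cons s y) ^ 2 * exp (-(2 * lam) * IKweight ε (Fin.cons s y))) (Ioc 0 t) :=
    ((hdφ.pow 2).mul (continuousOn_const.mul hF).rexp).integrableOn_Icc.mono_set
      Ioc_subset_Icc_self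
  rw [intervalIntegral.integral_of_le ht0] at h1D
  rw [← ofReal_integral_eq_lintegral_ofReal hint (.of_forall fun s => by positivity),
    ← ENNReal.ofReal_mul (by positivity)]
  exact ENNReal.ofReal_le_ofReal h1D

theorem setLIntegral_slice_le (hε : 0 < ε) (hK0 : 0 < K)
    (hK : ∀ x ∈ IKregion ε, IKarg ε x ≤ K) (hlam : 0 < lam) (hφ : ContDiff ℝ 1 φ)
    (hvan : ∀ x ∈ IKregion ε, x 0 = 0 → φ x = 0) (y : Fin 3 → ℝ) :
    ∫⁻ t in {t | Fin.cons t y ∈ IKregion ε},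
        ENNReal.ofReal (φ (Fin.cons t y) ^ 2 * exp (-(2 * lam) * IKweight ε (Fin.cons t y))) ≤
      ENNReal.ofReal (K * ε ^ 10 / (2 * lam)) *
        ∫⁻ t in {t | Fin.cons t y ∈ IKregion ε}, ENNReal.ofReal
          (pd 0 φ (Fin.cons t y) ^ 2 * exp (-(2 * lam) * IKweight ε (Fin.cons t y))) := by
  set S := {t : ℝ | Fin.cons t y ∈ IKregion ε}
  set I := ∫⁻ t in S, ENNReal.ofReal
    (pd 0 φ (Fin.cons t y) ^ 2 * exp (-(2 * lam) * IKweight ε (Fin.cons t y)))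
  have hS : MeasurableSet S :=
    IKregion.measurableSet.preimage (continuous_finCons_left y).measurable
  have hpoint : ∀ t ∈ S, ENNReal.ofReal
      (φ (Fin.cons t y) ^ 2 * exp (-(2 * lam) * IKweight ε (Fin.cons t y))) ≤
        ENNReal.ofReal (K / (2 * lam)) * I := fun t ht =>
    (ofReal_sq_mul_exp_cons_le hε hK0 hK hlam hφ hvan ht).trans <| mul_le_mul_right
      (lintegral_mono_set fun s hs => IKregion.cons_mem_of_le ht hs.1.le hs.2) _
  have hSvol : volume S ≤ ENNReal.ofReal (ε ^ 10) := calc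
    volume S ≤ volume (Icc 0 (ε ^ 10)) :=
      measure_mono fun t ht => ⟨ht.2.1, (abs_le.1 (IKregion.abs_apply_le ht 0)).2⟩
    _ = ENNReal.ofReal (ε ^ 10) := by simp [Real.volume_Icc]
  calc _ ≤ ∫⁻ _ in S, ENNReal.ofReal (K / (2 * lam)) * I := setLIntegral_mono' hS hpoint
    _ = ENNReal.ofReal (K / (2 * lam)) * I * volume S := setLIntegral_const _ _
    _ ≤ ENNReal.ofReal (K / (2 * lam)) * I * ENNReal.ofReal (ε ^ 10) := by gcongr
    _ = ENNReal.ofReal (K * ε ^ 10 / (2 * lam)) * I := by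
        rw [mul_right_comm, ← ENNReal.ofReal_mul (by positivity)]
        congr 2
        ring

theorem lintegral_IKregion_sq_mul_exp_le (hε : 0 < ε) (hK0 : 0 < K)
    (hK : ∀ x ∈ IKregion ε, IKarg ε x ≤ K) (hlam : 0 < lam) (hφ : ContDiff ℝ 1 φ)
    (hvan : ∀ x ∈ IKregion ε, x 0 = 0 → φ x = 0) :
    ∫⁻ x in IKregion ε, ENNReal.ofReal (φ x ^ 2 * exp (-(2 * lam) * IKweight ε x)) ≤
      ENNReal.ofReal (K * ε ^ 10 / (2 * lam)) *
        ∫⁻ x in IKregion ε, ENNReal.ofReal (pd 0 φ x ^ 2 * exp (-(2 * lam) * IKweight ε x)) := by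
  have hφc := hφ.continuous
  have hdφ := continuous_pd hφ 0
  rw [setLIntegral_eq_lintegral_setLIntegral_cons IKregion.measurableSet (by fun_prop),
    setLIntegral_eq_lintegral_setLIntegral_cons IKregion.measurableSet (by fun_prop),
    ← lintegral_const_mul' _ _ ENNReal.ofReal_ne_top]
  exact lintegral_mono fun y => setLIntegral_slice_le hε hK0 hK hlam hφ hvan y

theorem lintegral_IKregion_mul_density_le {μ M : ℝ} {ω : (Fin 4 → ℝ) → ℝ} (hε : 0 < ε)
    (hK0 : 0 < K) (hK : ∀ x ∈ IKregion ε, IKarg ε x ≤ K) (hμ : 0 < μ) (hμM : μ ≤ M)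
    (hω : ∀ x ∈ IKregion ε, μ ≤ ω x ∧ ω x ≤ M) (hlam : 0 < lam) (hφ : ContDiff ℝ 1 φ)
    (hvan : ∀ x ∈ IKregion ε, x 0 = 0 → φ x = 0) :
    ∫⁻ x in IKregion ε, ENNReal.ofReal (φ x ^ 2 * exp (-(2 * lam) * IKweight ε x) * ω x) ≤
      ENNReal.ofReal (M * (K * ε ^ 10 / 2) / μ / lam) * ∫⁻ x in IKregion ε,
        ENNReal.ofReal (pd 0 φ x ^ 2 * exp (-(2 * lam) * IKweight ε x) * ω x) := by
  have hB : MeasurableSet (IKregion ε) := IKregion.measurableSet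
  have hM : 0 < M := hμ.trans_le hμM
  calc _ ≤ ENNReal.ofReal M * ∫⁻ x in IKregion ε,
          ENNReal.ofReal (φ x ^ 2 * exp (-(2 * lam) * IKweight ε x)) :=
        setLIntegral_ofReal_mul_le hB (fun x _ => by positivity) fun x hx => (hω x hx).2
    _ ≤ ENNReal.ofReal M * (ENNReal.ofReal (K * ε ^ 10 / (2 * lam)) * ∫⁻ x in IKregion ε,
          ENNReal.ofReal (pd 0 φ x ^ 2 * exp (-(2 * lam) * IKweight ε x))) := by
        gcongr; exact lintegral_IKregion_sq_mul_exp_le hε hK0 hK hlam hφ hvan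
    _ ≤ ENNReal.ofReal M * (ENNReal.ofReal (K * ε ^ 10 / (2 * lam)) * (ENNReal.ofReal μ⁻¹ *
          ∫⁻ x in IKregion ε,
            ENNReal.ofReal (pd 0 φ x ^ 2 * exp (-(2 * lam) * IKweight ε x) * ω x))) := by
        gcongr
        exact setLIntegral_ofReal_le_inv_mul hB hμ (fun x _ => by positivity)
          fun x hx => (hω x hx).1
    _ = _ := by
        rw [← mul_assoc, ← mul_assoc, ← ENNReal.ofReal_mul hM.le,
          ← ENNReal.ofReal_mul (by positivity)]
        congr 2
        field_simp

theorem integrableOn_IKregion_mul_density {M : ℝ} {ω f : (Fin 4 → ℝ) → ℝ} (hε : 0 < ε)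
    (hωm : Measurable ω) (hω : ∀ x ∈ IKregion ε, ‖ω x‖ ≤ M) (hf : Continuous f) :
    IntegrableOn (fun x => f x ^ 2 * exp (-(2 * lam) * IKweight ε x) * ω x) (IKregion ε) :=
  (((hf.continuousOn.pow 2).mul (continuousOn_const.mul (continuousOn_IKweight hε)).rexp
    ).integrableOn_compact IKregion.isCompact).mul_bdd hωm.aestronglyMeasurable
    (ae_restrict_of_forall_mem IKregion.measurableSet hω)

end Carleman

theorem IK_derivative_lemma_general (ε μ M : ℝ) (hε : 0 < ε)
    (hμ : 0 < μ) (hμM : μ ≤ M) :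
    ∃ C > 0, ∀ ω : (Fin 4 → ℝ) → ℝ, Measurable ω →
      (∀ x ∈ IKregion ε, μ ≤ ω x ∧ ω x ≤ M) →
      ∀ lam : ℝ, 0 < lam →
      ∀ φ : (Fin 4 → ℝ) → ℝ, ContDiff ℝ 1 φ →
        (∀ x ∈ IKregion ε, x 0 = 0 → φ x = 0) →
        IKnorm ε ω lam φ ≤ C / Real.sqrt lam * IKnorm ε ω lam (pd 0 φ) := by
  obtain ⟨K, hK0, hK⟩ := exists_IKarg_le ε
  have hM : 0 < M := hμ.trans_le hμM
  refine ⟨√(M * (K * ε ^ 10 / 2) / μ), by positivity, fun ω hωm hω lam hlam φ hφ hvan => ?_⟩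
  have hω0 : ∀ x ∈ IKregion ε, 0 ≤ ω x := fun x hx => hμ.le.trans (hω x hx).1
  have hωM : ∀ x ∈ IKregion ε, ‖ω x‖ ≤ M := fun x hx => by
    rw [norm_of_nonneg (hω0 x hx)]; exact (hω x hx).2
  have hnonneg : ∀ f : (Fin 4 → ℝ) → ℝ, 0 ≤ᵐ[volume.restrict (IKregion ε)]
      fun x => f x ^ 2 * exp (-(2 * lam) * IKweight ε x) * ω x :=
    fun f => ae_restrict_of_forall_mem IKregion.measurableSet fun x hx =>
      mul_nonneg (by positivity) (hω0 x hx)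
  unfold IKnorm
  rw [← sqrt_div' _ hlam.le, ← sqrt_mul (by positivity)]
  exact sqrt_le_sqrt <| integral_le_mul_integral_of_lintegral_le (by positivity) (hnonneg φ)
    (integrableOn_IKregion_mul_density hε hωm hωM hφ.continuous).aestronglyMeasurable
    (hnonneg _) (integrableOn_IKregion_mul_density hε hωm hωM (continuous_pd hφ 0))
    (lintegral_IKregion_mul_density_le hε hK0 hK hμ hμM hω hlam hφ hvan)

/-- Coordinate form of the paper's key Lemma (`derivlem`). -/
theorem IK_derivative_lemma (ε μ M : ℝ) (hε : 0 < ε) (hε2 : ε ≤ 1/2)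
    (hμ : 0 < μ) (hμM : μ ≤ M) :
    ∃ C > 0, ∀ ω : (Fin 4 → ℝ) → ℝ, Measurable ω →
      (∀ x ∈ IKregion ε, μ ≤ ω x ∧ ω x ≤ M) →
      ∀ lam : ℝ, 0 < lam →
      ∀ φ : (Fin 4 → ℝ) → ℝ, ContDiff ℝ 1 φ →
        (∀ x ∈ IKregion ε, x 0 = 0 → φ x = 0) →
        IKnorm ε ω lam φ ≤ C / Real.sqrt lam * IKnorm ε ω lam (pd 0 φ) :=
  IK_derivative_lemma_general ε μ M hε hμ hμM
end

section
/- Let (X, 𝒜, μ) be a measure space, let f, T, V : X → ℝ be measurable with ∫_X V² dμ < ∞, and let β ∈ ℝ be such that V = 0 μ-almost everywhere on {x : f(x) < β}. Suppose there exist C > 0 and λ₀ > 0 such that for every λ ≥ λ₀, ∫_X T² e^(−2λf) dμ ≤ (C/λ) · ∫_X V² e^(−2λf) dμ. Then T = 0 μ-almost everywhere on {x : f(x) < β}. -/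
/-!
Restricting to `{f < β}`, where `e^{-2λf} ≥ e^{-2λβ}`, and using that `V` lives where
`e^{-2λf} ≤ e^{-2λβ}`, the Carleman inequality gives `∫_{f<β} T² ≤ (C/λ) ∫ V²` for all large `λ`:
the weights cancel exactly, and letting `λ → ∞` leaves `∫_{f<β} T² = 0`.
-/

open MeasureTheory Filter Real
open scoped ENNReal

theorem ENNReal.eq_zero_of_forall_le_ofReal_div_mul {a b : ℝ≥0∞} (hb : b ≠ ⊤) {C lam₀ : ℝ}
    (h : ∀ lam : ℝ, lam₀ ≤ lam → a ≤ ENNReal.ofReal (C / lam) * b) : a = 0 := by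
  have hlim : Tendsto (fun lam : ℝ => ENNReal.ofReal (C / lam) * b) atTop (nhds 0) := by
    simpa using ENNReal.Tendsto.mul_const
      (ENNReal.tendsto_ofReal (tendsto_const_nhds.div_atTop tendsto_id)) (Or.inr hb)
  exact nonpos_iff_eq_zero.1 (ge_of_tendsto hlim (eventually_atTop.2 ⟨lam₀, h⟩))

section ExponentialWeight

variable {X : Type*} [MeasurableSpace X] {μ : Measure X} {f g : X → ℝ} {t β : ℝ}

theorem setLIntegral_lt_le_exp_mul_lintegral_mul_exp (hf : Measurable f) (hg : 0 ≤ g)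
    (ht : 0 ≤ t) :
    ∫⁻ x in {x | f x < β}, ENNReal.ofReal (g x) ∂μ
      ≤ ENNReal.ofReal (exp (t * β)) * ∫⁻ x, ENNReal.ofReal (g x * exp (-t * f x)) ∂μ := by
  rw [← lintegral_const_mul' _ _ ENNReal.ofReal_ne_top]
  refine (setLIntegral_mono' (measurableSet_lt hf measurable_const) fun x hx => ?_).trans
    (setLIntegral_le_lintegral _ _)
  rw [← ENNReal.ofReal_mul (exp_nonneg _)]
  refine ENNReal.ofReal_le_ofReal ?_
  have hweight : 1 ≤ exp (t * (β - f x)) :=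
    one_le_exp (mul_nonneg ht (sub_nonneg.2 hx.le))
  calc g x = g x * 1 := (mul_one _).symm
    _ ≤ g x * exp (t * (β - f x)) := mul_le_mul_of_nonneg_left hweight (hg x)
    _ = exp (t * β) * (g x * exp (-t * f x)) := by
      rw [mul_sub, sub_eq_add_neg, exp_add, ← neg_mul]; ring

theorem lintegral_mul_exp_le_of_ae_lt_imp_eq_zero (hg : 0 ≤ g) (ht : 0 ≤ t)
    (hsupp : ∀ᵐ x ∂μ, f x < β → g x = 0) :
    ∫⁻ x, ENNReal.ofReal (g x * exp (-t * f x)) ∂μ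
      ≤ ENNReal.ofReal (exp (-t * β)) * ∫⁻ x, ENNReal.ofReal (g x) ∂μ := by
  rw [← lintegral_const_mul' _ _ ENNReal.ofReal_ne_top]
  refine lintegral_mono_ae ?_
  filter_upwards [hsupp] with x hx
  rw [← ENNReal.ofReal_mul (exp_nonneg _)]
  refine ENNReal.ofReal_le_ofReal ?_
  rcases lt_or_ge (f x) β with hlt | hge
  · simp [hx hlt]
  · rw [mul_comm (exp _)]
    exact mul_le_mul_of_nonneg_left
      (exp_le_exp.2 (mul_le_mul_of_nonpos_left hge (neg_nonpos.2 ht))) (hg x)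

end ExponentialWeight

theorem carleman_endgame_general {X : Type*} [MeasurableSpace X] (μ : Measure X)
    (f T V : X → ℝ) (hf : Measurable f) (hT : Measurable T)
    (hVint : ∫⁻ x, ENNReal.ofReal ((V x)^2) ∂μ < ⊤)
    (β : ℝ) (hVsupp : ∀ᵐ x ∂μ, f x < β → V x = 0)
    (hcarl : ∃ C > 0, ∃ lam₀ > 0, ∀ lam : ℝ, lam₀ ≤ lam →
      ∫⁻ x, ENNReal.ofReal ((T x)^2 * Real.exp (-(2*lam) * f x)) ∂μ
        ≤ ENNReal.ofReal (C / lam) *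
          ∫⁻ x, ENNReal.ofReal ((V x)^2 * Real.exp (-(2*lam) * f x)) ∂μ) :
    ∀ᵐ x ∂μ, f x < β → T x = 0 := by
  obtain ⟨C, -, lam₀, hlam₀, hcarl⟩ := hcarl
  have hVsupp' : ∀ᵐ x ∂μ, f x < β → V x ^ 2 = 0 := by
    filter_upwards [hVsupp] with x hx hfx
    simp [hx hfx]
  have hzero : ∫⁻ x in {x | f x < β}, ENNReal.ofReal (T x ^ 2) ∂μ = 0 := by
    refine ENNReal.eq_zero_of_forall_le_ofReal_div_mul (C := C) (lam₀ := lam₀) hVint.ne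
      fun lam hlam => ?_
    have ht : 0 ≤ 2 * lam := by linarith
    calc _ ≤ ENNReal.ofReal (exp (2 * lam * β)) *
            ∫⁻ x, ENNReal.ofReal (T x ^ 2 * exp (-(2 * lam) * f x)) ∂μ :=
          setLIntegral_lt_le_exp_mul_lintegral_mul_exp hf (fun x => sq_nonneg (T x)) ht
      _ ≤ ENNReal.ofReal (exp (2 * lam * β)) * (ENNReal.ofReal (C / lam) *
            ∫⁻ x, ENNReal.ofReal (V x ^ 2 * exp (-(2 * lam) * f x)) ∂μ) := by
          gcongr
          exact hcarl lam hlam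
      _ ≤ ENNReal.ofReal (exp (2 * lam * β)) * (ENNReal.ofReal (C / lam) *
            (ENNReal.ofReal (exp (-(2 * lam) * β)) * ∫⁻ x, ENNReal.ofReal (V x ^ 2) ∂μ)) := by
          gcongr
          exact lintegral_mul_exp_le_of_ae_lt_imp_eq_zero (fun x => sq_nonneg (V x)) ht hVsupp'
      _ = ENNReal.ofReal (C / lam) * ∫⁻ x, ENNReal.ofReal (V x ^ 2) ∂μ := by
          rw [mul_left_comm, ← mul_assoc (ENNReal.ofReal (exp _)),
            ← ENNReal.ofReal_mul (exp_nonneg _), ← exp_add,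
            show 2 * lam * β + -(2 * lam) * β = 0 by ring, exp_zero,
            ENNReal.ofReal_one, one_mul]
  filter_upwards [(setLIntegral_eq_zero_iff (measurableSet_lt hf measurable_const)
    (hT.pow_const 2).ennreal_ofReal).1 hzero] with x hx hfx
  exact pow_eq_zero_iff two_ne_zero |>.1
    (le_antisymm (ENNReal.ofReal_eq_zero.1 (hx hfx)) (sq_nonneg _))

/-- Endgame of a Carleman-estimate unique continuation argument: if the weighted
`L²`-norm of `T` is dominated, for all large `λ`, by `C/λ` times that of a term `V`
supported where the weight `f` is at least `β`, then `T` vanishes a.e. on `{f < β}`. -/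
theorem carleman_endgame {X : Type*} [MeasurableSpace X] (μ : Measure X)
    (f T V : X → ℝ) (hf : Measurable f) (hT : Measurable T) (hV : Measurable V)
    (hVint : ∫⁻ x, ENNReal.ofReal ((V x)^2) ∂μ < ⊤)
    (β : ℝ) (hVsupp : ∀ᵐ x ∂μ, f x < β → V x = 0)
    (hcarl : ∃ C > 0, ∃ lam₀ > 0, ∀ lam : ℝ, lam₀ ≤ lam →
      ∫⁻ x, ENNReal.ofReal ((T x)^2 * Real.exp (-(2*lam) * f x)) ∂μ
        ≤ ENNReal.ofReal (C / lam) *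
          ∫⁻ x, ENNReal.ofReal ((V x)^2 * Real.exp (-(2*lam) * f x)) ∂μ) :
    ∀ᵐ x ∂μ, f x < β → T x = 0 :=
  carleman_endgame_general μ f T V hf hT hVint β hVsupp hcarl
end

section
/- Write points of ℝ⁴ as x = (u₊, x₁, x₂, u₋), and let ∂₁, ∂₂ denote the partial derivatives in the x₁ and x₂ coordinates. Let w : ℝ⁴ → ℝ be continuously differentiable with ∂₁w = 0 and ∂₂w = 0 identically. Then for every three times continuously differentiable, compactly supported u : ℝ⁴ → ℝ one has ∫_{ℝ⁴} [(∂₁∂₁u)² + 2(∂₁∂₂u)² + (∂₂∂₂u)²] · w dx = ∫_{ℝ⁴} (∂₁∂₁u + ∂₂∂₂u)² · w dx, where the integrals are Lebesgue integrals. -/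
/-!
Integrating by parts along `∂₂` and then along `∂₁` never differentiates the weight, because
`∂₁w = ∂₂w = 0`. Together with the symmetry of second derivatives this turns
`∫ (∂₁∂₂u)² w` into `∫ ∂₁∂₁u · ∂₂∂₂u · w`, which is exactly the cross term in the expansion of
`(∂₁∂₁u + ∂₂∂₂u)²`.
-/

open MeasureTheory

theorem integral_sq_add_two_sq_add_sq_mul_eq {X : Type*} [TopologicalSpace X] [MeasurableSpace X]
    [OpensMeasurableSpace X] {μ : Measure X} [IsFiniteMeasureOnCompacts μ] {a b c w : X → ℝ}
    (ha : Continuous a) (hb : Continuous b) (hc : Continuous c) (hw : Continuous w)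
    (hac : HasCompactSupport a) (hbc : HasCompactSupport b) (hcc : HasCompactSupport c)
    (h : ∫ x, c x ^ 2 * w x ∂μ = ∫ x, a x * b x * w x ∂μ) :
    ∫ x, (a x ^ 2 + 2 * c x ^ 2 + b x ^ 2) * w x ∂μ = ∫ x, (a x + b x) ^ 2 * w x ∂μ := by
  have hweighted : ∀ F : X → ℝ, Continuous F → HasCompactSupport F →
      Integrable (fun x => F x * w x) μ := fun F hF hFc =>
    (hF.mul hw).integrable_of_hasCompactSupport hFc.mul_right
  have hsum : Integrable (fun x => (a x + b x) ^ 2 * w x) μ :=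
    hweighted _ (by fun_prop) ((hac.add hbc).comp_left (g := (· ^ 2)) (zero_pow two_ne_zero))
  have hc2 : Integrable (fun x => c x ^ 2 * w x) μ :=
    hweighted _ (by fun_prop) (hcc.comp_left (g := (· ^ 2)) (zero_pow two_ne_zero))
  have hab : Integrable (fun x => a x * b x * w x) μ := hweighted _ (by fun_prop) hac.mul_right
  have hdiff : Integrable (fun x => 2 * (c x ^ 2 * w x - a x * b x * w x)) μ :=
    (hc2.sub hab).const_mul 2
  calc ∫ x, (a x ^ 2 + 2 * c x ^ 2 + b x ^ 2) * w x ∂μ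
      = ∫ x, (a x + b x) ^ 2 * w x + 2 * (c x ^ 2 * w x - a x * b x * w x) ∂μ := by
        congr 1; ext x; ring
    _ = (∫ x, (a x + b x) ^ 2 * w x ∂μ)
          + 2 * ((∫ x, c x ^ 2 * w x ∂μ) - ∫ x, a x * b x * w x ∂μ) := by
        rw [integral_add hsum hdiff, integral_const_mul, integral_sub hc2 hab]
    _ = ∫ x, (a x + b x) ^ 2 * w x ∂μ := by
        rw [h, sub_self, mul_zero, add_zero]

section DirectionalDerivative

variable {E : Type*} [NormedAddCommGroup E] [NormedSpace ℝ E] [FiniteDimensional ℝ E]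
  [MeasurableSpace E] [BorelSpace E] {μ : Measure E} [μ.IsAddHaarMeasure]

theorem integral_fderiv_mul_mul_eq_neg_of_fderiv_eq_zero {f g w : E → ℝ} {v : E}
    (hf : ContDiff ℝ 1 f) (hg : ContDiff ℝ 1 g) (hw : ContDiff ℝ 1 w) (hfc : HasCompactSupport f)
    (hwv : ∀ x, fderiv ℝ w x v = 0) :
    ∫ x, fderiv ℝ f x v * g x * w x ∂μ = -∫ x, f x * fderiv ℝ g x v * w x ∂μ := by
  have hf' : Continuous fun x => fderiv ℝ f x v :=
    (hf.continuous_fderiv one_ne_zero).clm_apply continuous_const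
  have hg' : Continuous fun x => fderiv ℝ g x v :=
    (hg.continuous_fderiv one_ne_zero).clm_apply continuous_const
  have hgw : ∀ x, fderiv ℝ (fun y => g y * w y) x v = fderiv ℝ g x v * w x := fun x => by
    rw [fderiv_fun_mul (hg.differentiable one_ne_zero x) (hw.differentiable one_ne_zero x)]
    simp only [add_apply, smul_apply, smul_eq_mul, hwv]
    ring
  have ibp := integral_mul_fderiv_eq_neg_fderiv_mul_of_integrable (μ := μ) (v := v)
    (g := fun y => g y * w y)
    ((hf'.mul (hg.continuous.mul hw.continuous)).integrable_of_hasCompactSupport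
      (hfc.fderiv_apply ℝ v).mul_right)
    (by
      simp only [hgw]
      exact (hf.continuous.mul (hg'.mul hw.continuous)).integrable_of_hasCompactSupport
        hfc.mul_right)
    ((hf.continuous.mul (hg.continuous.mul hw.continuous)).integrable_of_hasCompactSupport
      hfc.mul_right)
    (fun x _ => hf.differentiable one_ne_zero x)
    (fun x _ => (hg.mul hw).differentiable one_ne_zero x)
  simp only [hgw, ← mul_assoc] at ibp
  rw [ibp, neg_neg]

end DirectionalDerivative

section PartialDerivative

variable {f : (Fin 4 → ℝ) → ℝ}

theorem ContDiff.pd {m n : WithTop ℕ∞} (hf : ContDiff ℝ m f) (hnm : n + 1 ≤ m) (i : Fin 4) :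
    ContDiff ℝ n (pd i f) :=
  (hf.fderiv_right hnm).clm_apply contDiff_const

theorem continuous_pd_pd (hf : ContDiff ℝ 2 f) (i j : Fin 4) :
    Continuous (pd i (pd j f)) :=
  ((hf.pd (n := 1) (by norm_num) j).pd (n := 0) (by norm_num) i).continuous

theorem HasCompactSupport.pd (hf : HasCompactSupport f) (i : Fin 4) :
    HasCompactSupport (pd i f) :=
  hf.fderiv_apply ℝ _

theorem pd_pd_comm (hf : ContDiff ℝ 2 f) (i j : Fin 4) : pd i (pd j f) = pd j (pd i f) := by
  have hsnd : ∀ x, ∀ a b : Fin 4,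
      pd a (pd b f) x = fderiv ℝ (fderiv ℝ f) x (Pi.single a 1) (Pi.single b 1) := fun x a b => by
    unfold pd
    rw [fderiv_clm_apply ((hf.fderiv_right le_rfl).differentiable one_ne_zero x)
      (differentiableAt_const _)]
    simp only [fderiv_fun_const, Pi.zero_apply, ContinuousLinearMap.comp_zero, zero_add,
      ContinuousLinearMap.flip_apply]
  funext x
  rw [hsnd, hsnd]
  exact hf.contDiffAt.isSymmSndFDerivAt (by simp) _ _

end PartialDerivative

theorem integral_sq_pd_pd_mul_eq {w u : (Fin 4 → ℝ) → ℝ} {i j : Fin 4} (hw : ContDiff ℝ 1 w)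
    (hwi : ∀ x, pd i w x = 0) (hwj : ∀ x, pd j w x = 0) (hu : ContDiff ℝ 3 u)
    (hsupp : HasCompactSupport u) :
    ∫ x, pd i (pd j u) x ^ 2 * w x = ∫ x, pd i (pd i u) x * pd j (pd j u) x * w x := by
  have hui : ContDiff ℝ 1 (pd i u) := hu.pd (by norm_num) i
  have huj : ContDiff ℝ 2 (pd j u) := hu.pd (by norm_num) j
  calc ∫ x, pd i (pd j u) x ^ 2 * w x
      = ∫ x, pd j (pd i u) x * pd i (pd j u) x * w x := by
        rw [pd_pd_comm (hu.of_le (by norm_num)) j i]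
        simp only [sq]
    _ = -∫ x, pd i u x * pd j (pd i (pd j u)) x * w x :=
        integral_fderiv_mul_mul_eq_neg_of_fderiv_eq_zero hui (huj.pd le_rfl i) hw (hsupp.pd i) hwj
    _ = -∫ x, pd i u x * pd i (pd j (pd j u)) x * w x := by
        rw [pd_pd_comm huj j i]
    _ = ∫ x, pd i (pd i u) x * pd j (pd j u) x * w x :=
        (integral_fderiv_mul_mul_eq_neg_of_fderiv_eq_zero hui (huj.pd le_rfl j) hw (hsupp.pd i)
          hwi).symm

/-- Flat model of the paper's key integration-by-parts computation (karaman1):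
with a weight constant in the tangential directions `∂₁, ∂₂`, the full tangential
Hessian energy equals the square of the tangential Laplacian. -/
theorem weighted_hessian_identity (w : (Fin 4 → ℝ) → ℝ) (hw : ContDiff ℝ 1 w)
    (hw1 : ∀ x, pd 1 w x = 0) (hw2 : ∀ x, pd 2 w x = 0)
    (u : (Fin 4 → ℝ) → ℝ) (hu : ContDiff ℝ 3 u) (hsupp : HasCompactSupport u) :
    ∫ x, ((pd 1 (pd 1 u) x)^2 + 2*(pd 1 (pd 2 u) x)^2 + (pd 2 (pd 2 u) x)^2) * w x
      = ∫ x, (pd 1 (pd 1 u) x + pd 2 (pd 2 u) x)^2 * w x := by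
  have hu2 : ContDiff ℝ 2 u := hu.of_le (by norm_num)
  exact integral_sq_add_two_sq_add_sq_mul_eq
    (continuous_pd_pd hu2 1 1) (continuous_pd_pd hu2 2 2) (continuous_pd_pd hu2 1 2) hw.continuous
    ((hsupp.pd 1).pd 1) ((hsupp.pd 2).pd 2) ((hsupp.pd 2).pd 1)
    (integral_sq_pd_pd_mul_eq hw hw1 hw2 hu hsupp)
end
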